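/- For every vertex v of the integer hull P_I = conv(P ∩ Z^n), the number of large slacks satisfies |{i ∈ {1,…,m} : b_i − (A v)_i ≥ Δ}| ≤ m − n. -/

import Mathlib

open Matrix Set

/-- The real matrix obtained from an integer matrix by casting entries. -/
noncomputable def matR {m n : ℕ} (A : Matrix (Fin m) (Fin n) ℤ) :
    Matrix (Fin m) (Fin n) ℝ := A.map (fun a => (a : ℝ))

/-- The polyhedron `P = {x ∈ ℝⁿ : A x ≤ b}`. -/
def poly {m n : ℕ} (A : Matrix (Fin m) (Fin n) ℤ) (b : Fin m → ℤ) :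
    Set (Fin n → ℝ) := {x | ∀ i, (matR A).mulVec x i ≤ (b i : ℝ)}

/-- The set of integer points of `ℝⁿ`. -/
def intPts {n : ℕ} : Set (Fin n → ℝ) := {x | ∀ j, ∃ z : ℤ, x j = (z : ℝ)}

/-- The integer hull `P_I = conv(P ∩ ℤⁿ)`. -/
noncomputable def intHull {m n : ℕ} (A : Matrix (Fin m) (Fin n) ℤ) (b : Fin m → ℤ) :
    Set (Fin n → ℝ) := convexHull ℝ (poly A b ∩ intPts)

/-- `Δ(A)`: the maximum absolute value of determinants of all `n × n` submatrices of `A`. -/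
def maxAbsSubdet {m n : ℕ} (A : Matrix (Fin m) (Fin n) ℤ) : ℕ :=
  Finset.univ.sup fun f : Fin n → Fin m => ((A.submatrix f id).det).natAbs

/-- The rank (over `ℝ`) of the submatrix of `A` formed by the rows indexed by `J`. -/
noncomputable def rowsRank {m n : ℕ} (A : Matrix (Fin m) (Fin n) ℤ) (J : Finset (Fin m)) : ℕ :=
  ((matR A).submatrix (fun i : {i // i ∈ J} => (i : Fin m)) id).rank

/-!
Let `v` be a vertex of `P_I` and `S` the set of rows whose slack at `v` is below `Δ`. If the rows
`A_S` did not span `ℝⁿ`, pick `n` linearly independent rows of `A` forming a matrix `B`, such that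
all of `A_S` lies in the span of the rows other than the `k`-th. The `k`-th column `c` of `adj B`
is an integer vector with `A_i c = det (B with row k replaced by A_i)` by Cramer's rule, so
`A_S c = 0`, `|A_i c| ≤ Δ` for all `i`, and `c ≠ 0` since `B_k c = det B`. Then `v ± c ∈ P ∩ ℤⁿ`,
contradicting that `v` is a vertex. Hence `|S| ≥ n`.
-/

section LinearAlgebra

open Submodule

theorem finrank_le_ncard_of_span_image_eq_top {ι K V : Type*} [Finite ι] [Field K]
    [AddCommGroup V] [Module K V] {r : ι → V} {S : Set ι} (h : span K (r '' S) = ⊤) :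
    Module.finrank K V ≤ S.ncard := by
  classical
  have := Fintype.ofFinite ι
  calc Module.finrank K V = Module.finrank K (span K (range (r ∘ (↑) : S → V))) := by
        rw [range_comp, Subtype.range_coe, h, finrank_top]
    _ ≤ Fintype.card S := finrank_range_le_card _
    _ = S.ncard := by rw [Fintype.card_eq_nat_card, Nat.card_coe_set_eq]

theorem exists_linearIndependent_subfamily_image_subset_span_compl {ι K V : Type*} [Field K]
    [AddCommGroup V] [Module K V] [FiniteDimensional K V] {r : ι → V}
    (hr : span K (range r) = ⊤) {S : Set ι} (hS : span K (r '' S) ≠ ⊤)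
    {d : ℕ} (hd : Module.finrank K V = d) :
    ∃ (T : Fin d → ι) (k : Fin d), LinearIndependent K (r ∘ T) ∧
      r '' S ⊆ span K ((r ∘ T) '' {k}ᶜ) := by
  obtain ⟨s, hsS, -, hSs, hs⟩ :=
    exists_linearIndepOn_extension (linearIndepOn_empty K r) (empty_subset S)
  obtain ⟨t, -, hst, hrt, ht⟩ := exists_linearIndepOn_extension hs (subset_univ s)
  have ht_span : span K (r '' t) = ⊤ :=
    eq_top_iff.2 (hr ▸ span_le.2 (by simpa only [image_univ] using hrt))
  let basis : Module.Basis t K V := .mk ht.linearIndependent (by rw [← image_eq_range, ht_span])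
  let e : Fin d ≃ t := ((Module.finBasis K V).reindex (finCongr hd)).indexEquiv basis
  obtain ⟨i₀, hi₀t, hi₀⟩ : ∃ i ∈ t, r i ∉ span K (r '' S) := by
    by_contra! h
    exact hS (eq_top_iff.2 (ht_span ▸ span_le.2 (image_subset_iff.2 h)))
  refine ⟨(↑) ∘ e, e.symm ⟨i₀, hi₀t⟩, ht.linearIndependent.comp e e.injective, ?_⟩
  refine hSs.trans (span_mono ?_)
  rintro _ ⟨i, hi, rfl⟩
  refine ⟨e.symm ⟨i, hst hi⟩, ?_, by simp⟩
  rw [mem_compl_singleton_iff, ne_eq, e.symm.injective.eq_iff, Subtype.mk.injEq]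
  rintro rfl
  exact hi₀ (subset_span (mem_image_of_mem r (hsS hi)))

end LinearAlgebra

theorem eq_zero_of_add_mem_of_sub_mem {𝕜 E : Type*} [Field 𝕜] [LinearOrder 𝕜]
    [IsStrictOrderedRing 𝕜] [AddCommGroup E] [Module 𝕜 E] {C : Set E} {x u : E}
    (hx : x ∈ C.extremePoints 𝕜) (hadd : x + u ∈ C) (hsub : x - u ∈ C) : u = 0 := by
  simpa using hx.2 hadd hsub (mem_openSegment_add_sub x u)

theorem dotProduct_adjugate_transpose {n R : Type*} [Fintype n] [DecidableEq n] [CommRing R]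
    (B : Matrix n n R) (k : n) (x : n → R) : x ⬝ᵥ Bᵀ.adjugate k = (B.updateRow k x).det := by
  rw [← cramer_transpose_apply, cramer_eq_adjugate_mulVec, mulVec, dotProduct_comm]

theorem updateRow_submatrix_eq_submatrix_update {m n R : Type*} [DecidableEq n]
    (A : Matrix m n R) (T : n → m) (k : n) (i : m) :
    (A.submatrix T id).updateRow k (A i) = A.submatrix (Function.update T k i) id := by
  ext j l
  by_cases h : j = k <;> simp [updateRow_apply, h]

theorem natAbs_det_submatrix_le_maxAbsSubdet {m n : ℕ} (A : Matrix (Fin m) (Fin n) ℤ)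
    (f : Fin n → Fin m) : (A.submatrix f id).det.natAbs ≤ maxAbsSubdet A :=
  Finset.le_sup (f := fun f => (A.submatrix f id).det.natAbs) (Finset.mem_univ f)

theorem matR_mulVec_intCast {m n : ℕ} (A : Matrix (Fin m) (Fin n) ℤ) (c : Fin n → ℤ) :
    matR A *ᵥ (fun j => (c j : ℝ)) = fun i => ((A *ᵥ c) i : ℝ) :=
  funext fun i => (RingHom.map_mulVec (Int.castRingHom ℝ) A c i).symm

theorem span_range_matR_eq_top {m n : ℕ} {A : Matrix (Fin m) (Fin n) ℤ}
    (hrank : (matR A).rank = n) : Submodule.span ℝ (range (matR A)) = ⊤ := by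
  refine Submodule.eq_top_of_finrank_eq ?_
  rw [rank_eq_finrank_span_row] at hrank
  rw [Module.finrank_fin_fun]
  exact hrank

open Submodule in
theorem exists_int_vector_orthogonal_of_span_ne_top {m n : ℕ} (A : Matrix (Fin m) (Fin n) ℤ)
    (hrank : (matR A).rank = n) {S : Set (Fin m)} (hS : span ℝ (matR A '' S) ≠ ⊤) :
    ∃ c : Fin n → ℤ, c ≠ 0 ∧ (∀ i ∈ S, (A *ᵥ c) i = 0) ∧
      ∀ i, |(A *ᵥ c) i| ≤ maxAbsSubdet A := by
  obtain ⟨T, k, hli, hST⟩ := exists_linearIndependent_subfamily_image_subset_span_compl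
    (span_range_matR_eq_top hrank) hS (Module.finrank_fin_fun ℝ)
  set B := A.submatrix T id
  set c := Bᵀ.adjugate k
  have hAc : ∀ i, (A *ᵥ c) i = (B.updateRow k (A i)).det :=
    fun i => dotProduct_adjugate_transpose B k (A i)
  have hB : B.det ≠ 0 := by
    have : IsUnit (matR B).det :=
      (isUnit_iff_isUnit_det _).mp (linearIndependent_rows_iff_isUnit.mp hli)
    have hcast : ((B.det : ℤ) : ℝ) = (matR B).det := RingHom.map_det (Int.castRingHom ℝ) B
    exact_mod_cast hcast ▸ this.ne_zero
  refine ⟨c, fun h0 => hB ?_, fun i hi => ?_, fun i => ?_⟩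
  · have := hAc (T k)
    rwa [h0, mulVec_zero, show A (T k) = B k from rfl, updateRow_eq_self, Pi.zero_apply,
      eq_comm] at this
  · let f := dotProductEquiv ℝ (Fin n) fun l => (c l : ℝ)
    have hf : ∀ i, f (matR A i) = (A *ᵥ c) i := fun i => by
      rw [dotProductEquiv_apply_apply, dotProduct_comm]
      exact congrFun (matR_mulVec_intCast A c) i
    have hker : span ℝ ((matR A ∘ T) '' {k}ᶜ) ≤ LinearMap.ker f := by
      refine span_le.2 ?_
      rintro _ ⟨j, hj, rfl⟩
      change f (matR A (T j)) = 0
      rw [hf, hAc, show A (T j) = B j from rfl, det_updateRow_eq_zero hj, Int.cast_zero]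
    have := hker (hST ⟨i, hi, rfl⟩)
    rw [LinearMap.mem_ker, hf] at this
    exact_mod_cast this
  · rw [hAc, updateRow_submatrix_eq_submatrix_update, Int.abs_eq_natAbs]
    exact_mod_cast natAbs_det_submatrix_le_maxAbsSubdet A _

theorem add_intCast_mem_poly_inter_intPts {m n : ℕ} {A : Matrix (Fin m) (Fin n) ℤ}
    {b : Fin m → ℤ} {v : Fin n → ℝ} (hv : v ∈ intPts) {c : Fin n → ℤ}
    (hc : ∀ i, |((A *ᵥ c) i : ℝ)| ≤ b i - (matR A *ᵥ v) i) :
    v + (fun j => (c j : ℝ)) ∈ poly A b ∩ intPts := by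
  refine ⟨fun i => ?_, fun j => ?_⟩
  · rw [mulVec_add, Pi.add_apply, matR_mulVec_intCast]
    linarith [le_abs_self ((A *ᵥ c) i : ℝ), hc i]
  · obtain ⟨z, hz⟩ := hv j
    exact ⟨z + c j, by simp [hz]⟩

theorem eq_zero_of_abs_mulVec_le_slack {m n : ℕ} {A : Matrix (Fin m) (Fin n) ℤ}
    {b : Fin m → ℤ} {v : Fin n → ℝ} (hv : v ∈ (intHull A b).extremePoints ℝ) {c : Fin n → ℤ}
    (hc : ∀ i, |((A *ᵥ c) i : ℝ)| ≤ b i - (matR A *ᵥ v) i) : c = 0 := by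
  have hvZ : v ∈ intPts := (extremePoints_convexHull_subset hv).2
  have hadd := add_intCast_mem_poly_inter_intPts hvZ hc
  have hsub := add_intCast_mem_poly_inter_intPts (A := A) (b := b) (c := -c) hvZ
    (by simpa [mulVec_neg] using hc)
  have := eq_zero_of_add_mem_of_sub_mem hv (subset_convexHull ℝ _ hadd)
    (subset_convexHull ℝ _ (by simpa [sub_eq_add_neg, Pi.neg_def] using hsub))
  exact funext fun j => by simpa using congrFun this j

theorem vertex_large_slack_count_general {m n : ℕ}
    (A : Matrix (Fin m) (Fin n) ℤ) (b : Fin m → ℤ) (Δ : ℕ)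
    (hΔ : maxAbsSubdet A = Δ)
    (hrank : (matR A).rank = n) :
    ∀ v ∈ Set.extremePoints ℝ (intHull A b),
      {i : Fin m | (Δ : ℝ) ≤ (b i : ℝ) - (matR A).mulVec v i}.ncard ≤ m - n := by
  intro v hv
  have hvP : v ∈ poly A b := (extremePoints_convexHull_subset hv).1
  set S := {i : Fin m | (b i : ℝ) - (matR A).mulVec v i < Δ}
  have hS : Submodule.span ℝ (matR A '' S) = ⊤ := by
    by_contra hS
    obtain ⟨c, hc0, hcS, hcΔ⟩ := exists_int_vector_orthogonal_of_span_ne_top A hrank hS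
    refine hc0 (eq_zero_of_abs_mulVec_le_slack hv fun i => ?_)
    by_cases hi : i ∈ S
    · rw [hcS i hi, Int.cast_zero, abs_zero]
      linarith [hvP i]
    · have : |((A *ᵥ c) i : ℝ)| ≤ Δ := by exact_mod_cast hΔ ▸ hcΔ i
      exact this.trans (not_lt.mp hi)
  have hn : n ≤ S.ncard := (Module.finrank_fin_fun ℝ).symm.trans_le
    (finrank_le_ncard_of_span_image_eq_top hS)
  have hcompl : {i : Fin m | (Δ : ℝ) ≤ (b i : ℝ) - (matR A).mulVec v i} = Sᶜ := by
    ext i; simp [S]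
  rw [hcompl, ncard_compl, Nat.card_eq_fintype_card, Fintype.card_fin]
  omega

/-- Every vertex `v` of the integer hull has at most `m - n` rows with slack at least `Δ`. -/
theorem vertex_large_slack_count {m n : ℕ}
    (A : Matrix (Fin m) (Fin n) ℤ) (b : Fin m → ℤ) (Δ : ℕ)
    (hΔ : maxAbsSubdet A = Δ) (hΔ1 : 1 ≤ Δ)
    (hrank : (matR A).rank = n)
    (hfull : affineSpan ℝ (poly A b) = ⊤) :
    ∀ v ∈ Set.extremePoints ℝ (intHull A b),
      {i : Fin m | (Δ : ℝ) ≤ (b i : ℝ) - (matR A).mulVec v i}.ncard ≤ m - n :=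
  vertex_large_slack_count_general A b Δ hΔ hrank
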